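/- arXiv:1902.05406 — 11 statements merged into one kernel-verified Lean document; each statement's English description precedes it below -/
import Mathlib

section
/- If a semigroup with zero (S,·,0) is nilpotent-free, then S is symmetric. -/
/-- If a semigroup with zero `(S,·,0)` is nilpotent-free
(`s² = 0 → s = 0`), then `S` is symmetric (`r·s·t = 0 → s·r·t = 0`). -/
theorem nilpotentFree_semigroupWithZero_is_symmetric
    {S : Type*} [SemigroupWithZero S] [Nontrivial S]
    (hnf : ∀ s : S, s * s = 0 → s = 0) :
    ∀ r s t : S, r * s * t = 0 → s * r * t = 0 := by
  have comm : ∀ a b : S, a * b = 0 → b * a = 0 := by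
    intro a b hab
    apply hnf
    have : b * a * (b * a) = b * (a * b) * a := by simp [mul_assoc]
    rw [this, hab, mul_zero, zero_mul]
  have mid : ∀ a b x : S, a * b = 0 → a * x * b = 0 := by
    intro a b x hab
    have hba := comm a b hab
    apply hnf
    have : a * x * b * (a * x * b) = a * x * (b * a) * x * b := by simp [mul_assoc]
    rw [this, hba, mul_zero, zero_mul, zero_mul]
  intro r s t h
  -- r * (s*t) = 0
  have h1 : r * (s * t) = 0 := by rw [← mul_assoc]; exact h
  -- insert t: (r*t)*(s*t) = 0, i.e. ((r*t)*s)*t = 0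
  have h2 : r * t * s * t = 0 := by
    have := mid r (s * t) t h1
    rwa [← mul_assoc] at this
  -- insert r in the middle: (r*t*s)*r*t = 0
  have h3 : r * t * s * r * t = 0 := mid (r * t * s) t r h2
  apply hnf
  have : s * r * t * (s * r * t) = s * (r * t * s * r * t) := by simp [mul_assoc]
  rw [this, h3, mul_zero]
end

section
/- Let S be a reversible semigroup with zero and let a ∈ S satisfy aᵐ = 0 for some positive integer m. Then for every t ∈ S and all positive integers m₁, m₂ with m₁ + m₂ = m one has a^{m₁}·t·a^{m₂} = 0; consequently, (t·a)ᵐ = 0 and (a·t)ᵐ = 0 for every t ∈ S. -/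
/-- Positive powers in a semigroup: `spow a k = a^(k+1)`. -/
def spow {S : Type*} [Mul S] (a : S) : ℕ → S
  | 0 => a
  | n + 1 => spow a n * a

lemma spow_succ' {S : Type*} [Semigroup S] (a : S) (n : ℕ) :
    spow a (n + 1) = a * spow a n := by
  induction n with
  | zero => rfl
  | succ k ih => show spow a (k+1) * a = a * (spow a k * a); rw [ih, mul_assoc]

lemma spow_add {S : Type*} [Semigroup S] (a : S) (i j : ℕ) :
    spow a (i + j + 1) = spow a i * spow a j := by
  induction j with
  | zero => rfl
  | succ k ih =>
      show spow a (i + k + 1 + 1) = spow a i * (spow a k * a)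
      rw [show i + k + 1 + 1 = (i + k + 1) + 1 from rfl]
      show spow a (i + k + 1) * a = _
      rw [ih, mul_assoc]

lemma spow_conj {S : Type*} [Semigroup S] (x y : S) (n : ℕ) :
    spow (x * y) (n + 1) = x * (spow (y * x) n * y) := by
  induction n with
  | zero =>
      show (x * y) * (x * y) = x * ((y * x) * y)
      simp [mul_assoc]
  | succ k ih =>
      show spow (x*y) (k+1) * (x*y) = x * ((spow (y*x) k * (y*x)) * y)
      rw [ih]
      simp [mul_assoc]

/-- In a reversible semigroup with zero, if `aᵐ = 0` (`m ≥ 1`), then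
`a^{m₁} · t · a^{m₂} = 0` for all `t ∈ S` and positive `m₁, m₂` with `m₁ + m₂ = m`;
consequently `(t·a)ᵐ = 0` and `(a·t)ᵐ = 0` for every `t ∈ S`.
Here `a^k` is rendered as `spow a (k-1)`. -/
theorem reversible_semigroupWithZero_nilpotent_sandwich
    {S : Type*} [SemigroupWithZero S] [Nontrivial S]
    (hrev : ∀ s t : S, s * t = 0 → t * s = 0)
    (a : S) (m : ℕ) (hm : 1 ≤ m) (ha : spow a (m - 1) = 0) :
    (∀ t : S, ∀ m₁ m₂ : ℕ, 1 ≤ m₁ → 1 ≤ m₂ → m₁ + m₂ = m →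
      spow a (m₁ - 1) * t * spow a (m₂ - 1) = 0) ∧
    (∀ t : S, spow (t * a) (m - 1) = 0 ∧ spow (a * t) (m - 1) = 0) := by
  -- insertion lemma
  have ins : ∀ x y s : S, x * y = 0 → x * s * y = 0 := by
    intro x y s h
    have h1 : y * x = 0 := hrev _ _ h
    have h2 : (s * y) * x = 0 := by rw [mul_assoc, h1, mul_zero]
    have h3 : x * (s * y) = 0 := hrev _ _ h2
    rw [mul_assoc]; exact h3
  constructor
  · intro t m₁ m₂ h1 h2 hsum
    have hadd : spow a (m₂ - 1) * spow a (m₁ - 1) = 0 := by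
      rw [← spow_add]
      have : m₂ - 1 + (m₁ - 1) + 1 = m - 1 := by omega
      rw [this, ha]
    have h4 : (t * spow a (m₂ - 1)) * spow a (m₁ - 1) = 0 := by
      rw [mul_assoc, hadd, mul_zero]
    have h5 := hrev _ _ h4
    rw [mul_assoc]; exact h5
  · intro t
    rcases Nat.lt_or_ge m 2 with hm2 | hm2
    · -- m = 1, so a = 0
      have hm1 : m = 1 := by omega
      subst hm1
      have ha0 : a = 0 := ha
      constructor <;> simp [spow, ha0]
    · -- m ≥ 2
      -- E k : (a*t)^{k+1} * a^{m-k-1} = 0, for k + 2 ≤ m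
      have E : ∀ k, k + 2 ≤ m → spow (a * t) k * spow a (m - k - 2) = 0 := by
        intro k
        induction k with
        | zero =>
            intro hk
            have h0 : a * spow a (m - 2) = 0 := by
              rw [← spow_succ']
              have : m - 2 + 1 = m - 1 := by omega
              rw [this, ha]
            have := ins a (spow a (m - 2)) t h0
            show (a * t) * spow a (m - 0 - 2) = 0
            rw [mul_assoc] at this ⊢
            simpa using this
        | succ k ih =>
            intro hk
            have hk' : k + 2 ≤ m := by omega
            have IH := ih hk'
            have hsplit : spow a (m - k - 2) = a * spow a (m - k - 3) := by
              rw [← spow_succ']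
              congr 1; omega
            rw [hsplit] at IH
            have IH' : (spow (a * t) k * a) * spow a (m - k - 3) = 0 := by
              rw [mul_assoc]; exact IH
            have h6 := ins _ _ t IH'
            show spow (a * t) k * (a * t) * spow a (m - (k+1) - 2) = 0
            have : m - (k + 1) - 2 = m - k - 3 := by omega
            rw [this, ← mul_assoc]
            exact h6
      have Efin : spow (a * t) (m - 2) * a = 0 := by
        have := E (m - 2) (by omega)
        simpa [show m - (m - 2) - 2 = 0 from by omega, spow] using this
      have hat : spow (a * t) (m - 1) = 0 := by
        have : m - 1 = (m - 2) + 1 := by omega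
        rw [this]
        show spow (a*t) (m-2) * (a * t) = 0
        rw [← mul_assoc, Efin, zero_mul]
      have hta : spow (t * a) (m - 1) = 0 := by
        have : m - 1 = (m - 2) + 1 := by omega
        rw [this, spow_conj]
        rw [show spow (a*t) (m-2) * a = 0 from Efin, mul_zero]
      exact ⟨hta, hat⟩
end

section
/- Let S be a reversible semiring. If a, b ∈ S satisfy aᵐ = 0 and bⁿ = 0 for positive integers m, n, then (a + b)^{m+n-1} = 0. Moreover, if a ∈ S is nilpotent, then x·a, a·y, and x·a·y are nilpotent for all x, y ∈ S. Hence the set of all nilpotent elements of S is a two-sided nil ideal of S. -/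
section Aux
variable {S : Type*} [Semiring S]

private lemma rev_ins (hrev : ∀ a b : S, a * b = 0 → b * a = 0)
    (u v x : S) (h : u * v = 0) : u * x * v = 0 := by
  have h1 : v * (u * x) = 0 := by
    rw [← mul_assoc, hrev _ _ h, zero_mul]
  exact hrev _ _ h1

private lemma pow_absorb (a : S) {m k : ℕ} (hm : a ^ m = 0) (hk : m ≤ k) :
    a ^ k = 0 := by
  obtain ⟨d, rfl⟩ := Nat.exists_eq_add_of_le hk
  rw [pow_add, hm, zero_mul]

private lemma word_zero_a (hrev : ∀ a b : S, a * b = 0 → b * a = 0)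
    (a b : S) (m : ℕ) (hm : a ^ m = 0) :
    ∀ (L : List Bool) (k : ℕ), m ≤ k + L.count true →
      a ^ k * (L.map (fun t => if t then a else b)).prod = 0 := by
  intro L
  induction L with
  | nil =>
      intro k hk
      simpa using pow_absorb a hm (by simpa using hk)
  | cons t L ih =>
      intro k hk
      cases t with
      | true =>
          have h := ih (k + 1) (by simp [List.count_cons] at hk ⊢; omega)
          rw [pow_succ] at h
          simpa [mul_assoc] using h
      | false =>
          have h0 := ih k (by simp [List.count_cons] at hk ⊢; omega)
          have h := rev_ins hrev _ _ b h0
          simpa [mul_assoc] using h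

private lemma word_zero_b (hrev : ∀ a b : S, a * b = 0 → b * a = 0)
    (a b : S) (n : ℕ) (hn : b ^ n = 0) :
    ∀ (L : List Bool) (k : ℕ), n ≤ k + L.count false →
      b ^ k * (L.map (fun t => if t then a else b)).prod = 0 := by
  intro L
  induction L with
  | nil =>
      intro k hk
      simpa using pow_absorb b hn (by simpa using hk)
  | cons t L ih =>
      intro k hk
      cases t with
      | false =>
          have h := ih (k + 1) (by simp [List.count_cons] at hk ⊢; omega)
          rw [pow_succ] at h
          simpa [mul_assoc] using h
      | true =>
          have h0 := ih k (by simp [List.count_cons] at hk ⊢; omega)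
          have h := rev_ins hrev _ _ a h0
          simpa [mul_assoc] using h

private lemma count_tf (L : List Bool) : L.count true + L.count false = L.length := by
  induction L with
  | nil => simp
  | cons t L ih => cases t <;> simp [List.count_cons] <;> omega

private lemma expand_words (a b : S) :
    ∀ (K : ℕ) (c : S),
      (∀ L : List Bool, L.length = K →
        (L.map (fun t => if t then a else b)).prod * c = 0) →
      (a + b) ^ K * c = 0 := by
  intro K
  induction K with
  | zero =>
      intro c h
      simpa using h [] rfl
  | succ K ih =>
      intro c h
      have h1 : (a + b) ^ K * (a * c) = 0 := by
        apply ih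
        intro L hL
        have := h (L ++ [true]) (by simp [hL])
        simpa [mul_assoc] using this
      have h2 : (a + b) ^ K * (b * c) = 0 := by
        apply ih
        intro L hL
        have := h (L ++ [false]) (by simp [hL])
        simpa [mul_assoc] using this
      calc (a + b) ^ (K + 1) * c
          = (a + b) ^ K * (a * c) + (a + b) ^ K * (b * c) := by
            rw [pow_succ, mul_assoc, add_mul, mul_add]
        _ = 0 := by rw [h1, h2, add_zero]

private lemma cohn_sum (hrev : ∀ a b : S, a * b = 0 → b * a = 0)
    (a b : S) (m n : ℕ) (hm : 0 < m) (hn : 0 < n)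
    (ha : a ^ m = 0) (hb : b ^ n = 0) :
    (a + b) ^ (m + n - 1) = 0 := by
  have := expand_words a b (m + n - 1) 1 ?_
  · simpa using this
  · intro L hL
    have hc := count_tf L
    have : m ≤ L.count true ∨ n ≤ L.count false := by omega
    rcases this with h | h
    · have := word_zero_a hrev a b m ha L 0 (by omega)
      simpa using this
    · have := word_zero_b hrev a b n hb L 0 (by omega)
      simpa using this

private lemma shift (x a : S) : ∀ k : ℕ, (x * a) ^ k * x = x * (a * x) ^ k := by
  intro k
  induction k with
  | zero => simp
  | succ k ih =>
      calc (x * a) ^ (k + 1) * x = (x * a) ^ k * x * (a * x) := by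
            rw [pow_succ]; simp [mul_assoc]
        _ = x * (a * x) ^ k * (a * x) := by rw [ih]
        _ = x * (a * x) ^ (k + 1) := by rw [pow_succ, mul_assoc]

private lemma ay_zero (hrev : ∀ a b : S, a * b = 0 → b * a = 0)
    (a y : S) (n : ℕ) (hn : a ^ n = 0) :
    ∀ (k j : ℕ), n ≤ j + k + 1 → a ^ j * (a * y) ^ (k + 1) = 0 := by
  intro k
  induction k with
  | zero =>
      intro j hj
      have : a ^ (j + 1) = 0 := pow_absorb a hn (by omega)
      calc a ^ j * (a * y) ^ 1 = a ^ (j + 1) * y := by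
            rw [pow_one, pow_succ, mul_assoc]
        _ = 0 := by rw [this, zero_mul]
  | succ k ih =>
      intro j hj
      have h0 : a ^ (j + 1) * (a * y) ^ (k + 1) = 0 := ih (j + 1) (by omega)
      have h := rev_ins hrev _ _ y h0
      calc a ^ j * (a * y) ^ (k + 2)
          = a ^ (j + 1) * y * (a * y) ^ (k + 1) := by
            rw [pow_succ' (a * y) (k + 1), pow_succ a j]
            simp only [mul_assoc]
        _ = 0 := h

private lemma ay_nil (hrev : ∀ a b : S, a * b = 0 → b * a = 0)
    (a y : S) (n : ℕ) (hn0 : 0 < n) (hn : a ^ n = 0) : (a * y) ^ n = 0 := by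
  obtain ⟨k, rfl⟩ : ∃ k, n = k + 1 := ⟨n - 1, by omega⟩
  have := ay_zero hrev a y (k + 1) hn k 0 (by omega)
  simpa using this

private lemma xa_nil (hrev : ∀ a b : S, a * b = 0 → b * a = 0)
    (a x : S) (n : ℕ) (hn0 : 0 < n) (hn : a ^ n = 0) : (x * a) ^ (n + 1) = 0 := by
  have hax : (a * x) ^ n = 0 := ay_nil hrev a x n hn0 hn
  rw [pow_succ, ← mul_assoc, shift, hax, mul_zero, zero_mul]

private lemma xay_nil (hrev : ∀ a b : S, a * b = 0 → b * a = 0)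
    (a x y : S) (n : ℕ) (hn0 : 0 < n) (hn : a ^ n = 0) :
    (x * a * y) ^ (n + 1) = 0 := by
  have h1 : (a * (y * x)) ^ n = 0 := ay_nil hrev a (y * x) n hn0 hn
  have h2 : ((a * y) * x) ^ n = 0 := by rwa [mul_assoc]
  rw [mul_assoc, pow_succ, ← mul_assoc ((x * (a * y)) ^ n), shift x (a * y) n,
    h2, mul_zero, zero_mul]
end Aux

/-- Cohn's theorem for reversible semirings. In a reversible semiring `S`:
if `aᵐ = 0` and `bⁿ = 0` (`m, n ≥ 1`), then `(a+b)^{m+n-1} = 0`; if `a` is nilpotent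
then so are `x·a`, `a·y` and `x·a·y` for all `x, y`; hence the set `N` of nilpotent
elements is a two-sided nil ideal (contains `0`, closed under addition, and absorbs
multiplication from both sides). -/
theorem reversible_semiring_nilpotents_form_ideal
    {S : Type*} [Semiring S] [Nontrivial S]
    (hrev : ∀ a b : S, a * b = 0 → b * a = 0) :
    (∀ a b : S, ∀ m n : ℕ, 0 < m → 0 < n → a ^ m = 0 → b ^ n = 0 →
      (a + b) ^ (m + n - 1) = 0) ∧
    (∀ a : S, (∃ n : ℕ, 0 < n ∧ a ^ n = 0) → ∀ x y : S,
      (∃ n : ℕ, 0 < n ∧ (x * a) ^ n = 0) ∧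
      (∃ n : ℕ, 0 < n ∧ (a * y) ^ n = 0) ∧
      (∃ n : ℕ, 0 < n ∧ (x * a * y) ^ n = 0)) ∧
    ((0 : S) ∈ {s : S | ∃ n : ℕ, 0 < n ∧ s ^ n = 0} ∧
      (∀ a b : S, a ∈ {s : S | ∃ n : ℕ, 0 < n ∧ s ^ n = 0} →
        b ∈ {s : S | ∃ n : ℕ, 0 < n ∧ s ^ n = 0} →
        a + b ∈ {s : S | ∃ n : ℕ, 0 < n ∧ s ^ n = 0}) ∧
      (∀ s a : S, a ∈ {x : S | ∃ n : ℕ, 0 < n ∧ x ^ n = 0} →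
        s * a ∈ {x : S | ∃ n : ℕ, 0 < n ∧ x ^ n = 0} ∧
        a * s ∈ {x : S | ∃ n : ℕ, 0 < n ∧ x ^ n = 0})) := by
  have part1 : ∀ a b : S, ∀ m n : ℕ, 0 < m → 0 < n → a ^ m = 0 → b ^ n = 0 →
      (a + b) ^ (m + n - 1) = 0 := fun a b m n hm hn ha hb =>
    cohn_sum hrev a b m n hm hn ha hb
  have part2 : ∀ a : S, (∃ n : ℕ, 0 < n ∧ a ^ n = 0) → ∀ x y : S,
      (∃ n : ℕ, 0 < n ∧ (x * a) ^ n = 0) ∧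
      (∃ n : ℕ, 0 < n ∧ (a * y) ^ n = 0) ∧
      (∃ n : ℕ, 0 < n ∧ (x * a * y) ^ n = 0) := by
    rintro a ⟨n, hn0, hn⟩ x y
    exact ⟨⟨n + 1, by omega, xa_nil hrev a x n hn0 hn⟩,
      ⟨n, hn0, ay_nil hrev a y n hn0 hn⟩,
      ⟨n + 1, by omega, xay_nil hrev a x y n hn0 hn⟩⟩
  refine ⟨part1, part2, ⟨1, one_pos, by simp⟩, ?_, ?_⟩
  · rintro a b ⟨m, hm0, hm⟩ ⟨n, hn0, hn⟩
    exact ⟨m + n - 1, by omega, part1 a b m n hm0 hn0 hm hn⟩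
  · intro s a ha
    obtain ⟨h1, h2, -⟩ := part2 a ha s s
    exact ⟨h1, h2⟩
end

section
/- Let S be an Armendariz semiring. Then S is reversible if and only if the polynomial semiring S[X] is reversible. -/
/-- An Armendariz semiring `S` is reversible if and only if the
polynomial semiring `S[X]` is reversible. -/
theorem armendariz_reversible_iff_polynomial_reversible
    {S : Type*} [Semiring S] [Nontrivial S]
    (hArm : ∀ f g : Polynomial S, f * g = 0 → ∀ i j : ℕ, f.coeff i * g.coeff j = 0) :
    (∀ a b : S, a * b = 0 → b * a = 0) ↔
      (∀ f g : Polynomial S, f * g = 0 → g * f = 0) := by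
  constructor
  · intro hrev f g hfg
    ext n
    rw [Polynomial.coeff_mul, Polynomial.coeff_zero]
    apply Finset.sum_eq_zero
    intro p _
    exact hrev _ _ (hArm f g hfg p.2 p.1)
  · intro hrev a b hab
    have h : (Polynomial.C a) * (Polynomial.C b) = 0 := by
      rw [← Polynomial.C_mul, hab, Polynomial.C_0]
    have := hrev _ _ h
    rw [← Polynomial.C_mul] at this
    exact (Polynomial.C_eq_zero).mp this
end

section
/- Let S be a zerosumfree semiring. Then S is reversible if and only if the formal power series semiring S[[X]] is reversible. -/
/-!
Over a zerosumfree semiring the coefficient `∑_{i+j=n} fᵢ gⱼ` of `f * g` vanishes only if each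
of its terms does, so `f * g = 0` iff `fᵢ gⱼ = 0` for all `i, j`, and reversibility of `S` swaps
each of these products. Conversely, `S` embeds into `S⟦X⟧` as the constants.
-/

open Finset PowerSeries

theorem Finset.eq_zero_of_sum_eq_zero_of_zeroSumFree {ι M : Type*} [AddCommMonoid M]
    (hzsf : ∀ s t : M, s + t = 0 → s = 0 ∧ t = 0) {s : Finset ι} {f : ι → M}
    (h : ∑ i ∈ s, f i = 0) {i : ι} (hi : i ∈ s) : f i = 0 := by
  classical
  rw [← add_sum_erase s f hi] at h
  exact (hzsf _ _ h).1

namespace PowerSeries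

variable {S : Type*} [Semiring S]

theorem mul_eq_zero_of_coeff_mul_coeff_eq_zero {f g : S⟦X⟧}
    (h : ∀ i j, coeff i f * coeff j g = 0) : f * g = 0 := by
  ext n
  rw [coeff_mul, map_zero]
  exact sum_eq_zero fun p _ => h p.1 p.2

theorem mul_eq_zero_iff_coeff_mul_coeff_eq_zero (hzsf : ∀ s t : S, s + t = 0 → s = 0 ∧ t = 0)
    {f g : S⟦X⟧} : f * g = 0 ↔ ∀ i j, coeff i f * coeff j g = 0 := by
  refine ⟨fun h i j => ?_, mul_eq_zero_of_coeff_mul_coeff_eq_zero⟩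
  have hcoeff : ∑ p ∈ antidiagonal (i + j), coeff p.1 f * coeff p.2 g = 0 := by
    rw [← coeff_mul, h, map_zero]
  exact eq_zero_of_sum_eq_zero_of_zeroSumFree hzsf hcoeff (i := (i, j))
    (mem_antidiagonal.2 rfl)

theorem reversible_of_reversible_powerSeries (h : ∀ f g : S⟦X⟧, f * g = 0 → g * f = 0)
    {a b : S} (hab : a * b = 0) : b * a = 0 :=
  C_injective (by rw [map_mul, map_zero, h _ _ (by rw [← map_mul, hab, map_zero])])

end PowerSeries

theorem zerosumfree_reversible_iff_powerSeries_reversible_general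
    {S : Type*} [Semiring S]
    (hzsf : ∀ s t : S, s + t = 0 → s = 0 ∧ t = 0) :
    (∀ a b : S, a * b = 0 → b * a = 0) ↔
      (∀ f g : PowerSeries S, f * g = 0 → g * f = 0) := by
  refine ⟨fun hrev f g hfg => ?_, fun hrev _ _ => reversible_of_reversible_powerSeries hrev⟩
  rw [mul_eq_zero_iff_coeff_mul_coeff_eq_zero hzsf] at hfg ⊢
  exact fun i j => hrev _ _ (hfg j i)

/-- A zerosumfree semiring `S` is reversible if and only if the formal
power series semiring `S[[X]]` is reversible. -/
theorem zerosumfree_reversible_iff_powerSeries_reversible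
    {S : Type*} [Semiring S] [Nontrivial S]
    (hzsf : ∀ s t : S, s + t = 0 → s = 0 ∧ t = 0) :
    (∀ a b : S, a * b = 0 → b * a = 0) ↔
      (∀ f g : PowerSeries S, f * g = 0 → g * f = 0) :=
  zerosumfree_reversible_iff_powerSeries_reversible_general hzsf
end

section
/- Let S be a nilpotent-free semiring (s² = 0 implies s = 0 for all s ∈ S). Then the expectation semiring S ⊕̃ S, namely S × S with componentwise addition and multiplication (s₁, m₁)·(s₂, m₂) = (s₁s₂, s₁m₂ + m₁s₂) (the trivial square-zero extension of S by itself), is reversible: (a,b)·(c,d) = (0,0) implies (c,d)·(a,b) = (0,0). -/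
/-- For a nilpotent-free semiring `S` (`s² = 0 → s = 0`), the
expectation semiring `S ⊕̃ S` (pairs with componentwise addition and multiplication
`(s₁,m₁)·(s₂,m₂) = (s₁s₂, s₁m₂ + m₁s₂)`) is reversible:
`(a,b)·(c,d) = (0,0)` implies `(c,d)·(a,b) = (0,0)`. -/
theorem expectation_semiring_of_nilpotentFree_is_reversible
    {S : Type*} [Semiring S] [Nontrivial S]
    (hnf : ∀ s : S, s * s = 0 → s = 0) :
    ∀ a b c d : S, (a * c, a * d + b * c) = ((0 : S), (0 : S)) →
      (c * a, c * b + d * a) = ((0 : S), (0 : S)) := by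
  intro a b c d h
  have h1 : a * c = 0 := congrArg Prod.fst h
  have h2 : a * d + b * c = 0 := congrArg Prod.snd h
  have hca : c * a = 0 := by
    apply hnf
    have e : c * a * (c * a) = c * (a * c) * a := by
      simp [mul_assoc]
    rw [e, h1, mul_zero, zero_mul]
  have hcb : c * b = 0 := by
    apply hnf
    have e : c * (a * d + b * c) * b = c * a * (d * b) + c * b * (c * b) := by
      simp [mul_add, add_mul, mul_assoc]
    rw [h2, hca, mul_zero, zero_mul, zero_mul, zero_add] at e
    exact e.symm
  have hda : d * a = 0 := by
    apply hnf
    have e : d * (a * d + b * c) * a = d * a * (d * a) + d * b * (c * a) := by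
      simp [mul_add, add_mul, mul_assoc]
    rw [h2, hca, mul_zero] at e
    simpa using e.symm
  simp [hca, hcb, hda]
end

section
/- Let S be a commutative entire semiring (ab = 0 implies a = 0 or b = 0) and let σ : S → S be a semiring endomorphism with trivial kernel (σ(x) = 0 implies x = 0). Then the σ-expectation semiring (S ⊕̃ S)_σ is reversible; explicitly, for all a, b, c, d ∈ S, if a·c = 0 and σ(a)·d + b·c = 0, then c·a = 0 and σ(c)·b + d·a = 0. -/
/-- Let `S` be a commutative entire semiring and `σ : S → S` a semiring
endomorphism with trivial kernel. Then the `σ`-expectation semiring `(S ⊕̃ S)_σ`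
(multiplication `(s₁,m₁)·(s₂,m₂) = (s₁s₂, σ(s₁)m₂ + m₁s₂)`) is reversible:
if `a·c = 0` and `σ(a)·d + b·c = 0`, then `c·a = 0` and `σ(c)·b + d·a = 0`. -/
theorem sigma_expectation_semiring_of_entire_is_reversible
    {S : Type*} [CommSemiring S] [Nontrivial S]
    (hent : ∀ a b : S, a * b = 0 → a = 0 ∨ b = 0)
    (σ : S →+* S) (hker : ∀ x : S, σ x = 0 → x = 0) :
    ∀ a b c d : S, a * c = 0 → σ a * d + b * c = 0 →
      c * a = 0 ∧ σ c * b + d * a = 0 := by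
  intro a b c d hac h2
  refine ⟨by rw [mul_comm]; exact hac, ?_⟩
  rcases hent a c hac with rfl | rfl
  · simp only [map_zero, zero_mul, zero_add] at h2
    rcases hent b c h2 with rfl | rfl <;> simp
  · simp only [mul_zero, add_zero] at h2
    rcases hent (σ a) d h2 with h | rfl
    · rcases hker a h with rfl; simp
    · simp
end

section
/- Let E be a commutative entire semiring (xy = 0 implies x = 0 or y = 0), let S = E × E with componentwise operations, and let σ : S → S be the swap endomorphism σ(s,t) = (t,s). In the σ-expectation semiring (S ⊕̃ S)_σ, whose elements are ((a,b),(c,d)) with a,b,c,d ∈ E and whose multiplication is ((a,b),(c,d))·((e,f),(g,h)) = ((ae, bf), (bg + ce, ah + df)), an element ((a,b),(c,d)) is a left zero-divisor if and only if a = 0 or b = 0, and it is a right zero-divisor if and only if a = 0 or b = 0. Explicitly, for all a,b,c,d ∈ E: [there exist e,f,g,h ∈ E, not all zero, with a·e = 0, b·f = 0, b·g + c·e = 0, and a·h + d·f = 0] if and only if (a = 0 or b = 0); and [there exist e,f,g,h ∈ E, not all zero, with e·a = 0, f·b = 0, f·c + g·a = 0, and e·d + h·b = 0] if and only if (a = 0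 or b = 0). Consequently, (S ⊕̃ S)_σ is eversible. -/
/-- Let `E` be a commutative entire semiring, `S = E × E` with
componentwise operations and `σ` the swap endomorphism. In `(S ⊕̃ S)_σ`, whose
multiplication is `((a,b),(c,d))·((e,f),(g,h)) = ((ae,bf),(bg+ce, ah+df))`,
an element `((a,b),(c,d))` is a left zero-divisor iff `a = 0 ∨ b = 0`, and a right
zero-divisor iff `a = 0 ∨ b = 0`; consequently `(S ⊕̃ S)_σ` is eversible (an element
is a left zero-divisor iff it is a right zero-divisor). -/
theorem swap_sigma_expectation_semiring_zero_divisors_and_eversible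
    {E : Type*} [CommSemiring E] [Nontrivial E]
    (hent : ∀ x y : E, x * y = 0 → x = 0 ∨ y = 0) :
    (∀ a b c d : E,
      ((∃ e f g h : E, ¬(e = 0 ∧ f = 0 ∧ g = 0 ∧ h = 0) ∧
          a * e = 0 ∧ b * f = 0 ∧ b * g + c * e = 0 ∧ a * h + d * f = 0) ↔
        (a = 0 ∨ b = 0))) ∧
    (∀ a b c d : E,
      ((∃ e f g h : E, ¬(e = 0 ∧ f = 0 ∧ g = 0 ∧ h = 0) ∧
          e * a = 0 ∧ f * b = 0 ∧ f * c + g * a = 0 ∧ e * d + h * b = 0) ↔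
        (a = 0 ∨ b = 0))) ∧
    (∀ a b c d : E,
      ((∃ e f g h : E, ¬(e = 0 ∧ f = 0 ∧ g = 0 ∧ h = 0) ∧
          a * e = 0 ∧ b * f = 0 ∧ b * g + c * e = 0 ∧ a * h + d * f = 0) ↔
        (∃ e f g h : E, ¬(e = 0 ∧ f = 0 ∧ g = 0 ∧ h = 0) ∧
          e * a = 0 ∧ f * b = 0 ∧ f * c + g * a = 0 ∧ e * d + h * b = 0))) := by
  have L : ∀ a b c d : E,
      ((∃ e f g h : E, ¬(e = 0 ∧ f = 0 ∧ g = 0 ∧ h = 0) ∧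
          a * e = 0 ∧ b * f = 0 ∧ b * g + c * e = 0 ∧ a * h + d * f = 0) ↔
        (a = 0 ∨ b = 0)) := by
    intro a b c d
    constructor
    · rintro ⟨e, f, g, h, hnz, h1, h2, h3, h4⟩
      by_contra hab
      push_neg at hab
      obtain ⟨ha, hb⟩ := hab
      have he : e = 0 := (hent a e h1).resolve_left ha
      have hf : f = 0 := (hent b f h2).resolve_left hb
      subst he; subst hf
      simp only [mul_zero, add_zero] at h3 h4
      have hg : g = 0 := (hent b g h3).resolve_left hb
      have hh : h = 0 := (hent a h h4).resolve_left ha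
      exact hnz ⟨rfl, rfl, hg, hh⟩
    · rintro (ha | hb)
      · exact ⟨0, 0, 0, 1, by simp, by simp [ha]⟩
      · exact ⟨0, 0, 1, 0, by simp, by simp [hb]⟩
  have R : ∀ a b c d : E,
      ((∃ e f g h : E, ¬(e = 0 ∧ f = 0 ∧ g = 0 ∧ h = 0) ∧
          e * a = 0 ∧ f * b = 0 ∧ f * c + g * a = 0 ∧ e * d + h * b = 0) ↔
        (a = 0 ∨ b = 0)) := by
    intro a b c d
    constructor
    · rintro ⟨e, f, g, h, hnz, h1, h2, h3, h4⟩
      by_contra hab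
      push_neg at hab
      obtain ⟨ha, hb⟩ := hab
      have he : e = 0 := (hent e a h1).resolve_right ha
      have hf : f = 0 := (hent f b h2).resolve_right hb
      subst he; subst hf
      simp only [zero_mul, zero_add] at h3 h4
      have hg : g = 0 := (hent g a h3).resolve_right ha
      have hh : h = 0 := (hent h b h4).resolve_right hb
      exact hnz ⟨rfl, rfl, hg, hh⟩
    · rintro (ha | hb)
      · exact ⟨0, 0, 1, 0, by simp, by simp [ha]⟩
      · exact ⟨0, 0, 0, 1, by simp, by simp [hb]⟩
  exact ⟨L, R, fun a b c d => (L a b c d).trans (R a b c d).symm⟩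
end

section
/- Let S be a semiring. The polynomial semiring S[X] is reversible if and only if the Laurent polynomial semiring S[X; X⁻¹] is reversible. -/
open LaurentPolynomial

theorem laurent_mul_shift {S : Type*} [Semiring S] (f g : LaurentPolynomial S) (n m : ℤ) :
    (f * T n) * (g * T m) = (f * g) * T (n + m) := by
  rw [mul_assoc, T_mul, ← mul_assoc, ← mul_assoc, mul_assoc (f * g), ← T_add, add_comm m n]

theorem laurent_aux_eq_zero {S : Type*} [Semiring S] {f : LaurentPolynomial S} (n : ℤ)
    (h : f * T n = 0) : f = 0 :=
  ((isUnit_T (R := S) n).mul_left_eq_zero).mp h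

/-- For any semiring `S`, the polynomial semiring `S[X]` is reversible
if and only if the Laurent polynomial semiring `S[X;X⁻¹]` is reversible. -/
theorem polynomial_reversible_iff_laurent_reversible
    {S : Type*} [Semiring S] [Nontrivial S] :
    (∀ f g : Polynomial S, f * g = 0 → g * f = 0) ↔
      (∀ f g : LaurentPolynomial S, f * g = 0 → g * f = 0) := by
  constructor
  · intro H f g hfg
    obtain ⟨n, p, hp⟩ := f.exists_T_pow
    obtain ⟨m, q, hq⟩ := g.exists_T_pow
    have hpq : Polynomial.toLaurent (p * q) = 0 := by
      rw [map_mul, hp, hq, laurent_mul_shift, hfg, zero_mul]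
    have h2 : q * p = 0 := H p q (Polynomial.toLaurent_eq_zero.mp hpq)
    have h3 : (g * f) * T ((m : ℤ) + n) = 0 := by
      rw [← laurent_mul_shift, ← hp, ← hq, ← map_mul, h2, map_zero]
    exact laurent_aux_eq_zero _ h3
  · intro H p q hpq
    have h1 : (Polynomial.toLaurent p) * (Polynomial.toLaurent q) = 0 := by
      rw [← map_mul, hpq, map_zero]
    have h2 := H _ _ h1
    rw [← map_mul] at h2
    exact Polynomial.toLaurent_injective (by simpa using h2)
end

section
/- Let S be a semiring. The polynomial semiring S[X] is eversible if and only if the Laurent polynomial semiring S[X; X⁻¹] is eversible. -/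
open LaurentPolynomial Polynomial

private lemma tT_zero {S : Type*} [Semiring S] {a : LaurentPolynomial S} {n : ℤ}
    (h : a * T n = 0) : a = 0 := ((isUnit_T n).mul_left_eq_zero).mp h

private lemma Laurent_LZD_iff {S : Type*} [Semiring S] (f : LaurentPolynomial S)
    (n : ℕ) (p : Polynomial S) (hp : p.toLaurent = f * T n) :
    (∃ g : LaurentPolynomial S, g ≠ 0 ∧ f * g = 0) ↔
    (∃ q : Polynomial S, q ≠ 0 ∧ p * q = 0) := by
  constructor
  · rintro ⟨g, hg, hfg⟩
    obtain ⟨m, q, hq⟩ := g.exists_T_pow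
    refine ⟨q, fun h0 => hg ?_, ?_⟩
    · rw [h0, map_zero toLaurent] at hq
      exact tT_zero hq.symm
    · apply Polynomial.toLaurent_injective
      rw [map_mul, hp, hq, map_zero toLaurent,
        mul_assoc, ← mul_assoc (T (n : ℤ)), (LaurentPolynomial.commute_T (n : ℤ) g).eq,
        mul_assoc, ← mul_assoc, hfg, zero_mul]
  · rintro ⟨q, hq, hpq⟩
    refine ⟨T n * q.toLaurent, ?_, ?_⟩
    · rw [Ne, (isUnit_T (n : ℤ)).mul_right_eq_zero]
      simpa [Polynomial.toLaurent_eq_zero] using hq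
    · rw [← mul_assoc, ← hp, ← map_mul, hpq, map_zero toLaurent]

private lemma Laurent_RZD_iff {S : Type*} [Semiring S] (f : LaurentPolynomial S)
    (n : ℕ) (p : Polynomial S) (hp : p.toLaurent = f * T n) :
    (∃ g : LaurentPolynomial S, g ≠ 0 ∧ g * f = 0) ↔
    (∃ q : Polynomial S, q ≠ 0 ∧ q * p = 0) := by
  constructor
  · rintro ⟨g, hg, hgf⟩
    obtain ⟨m, q, hq⟩ := g.exists_T_pow
    refine ⟨q, fun h0 => hg ?_, ?_⟩
    · rw [h0, map_zero toLaurent] at hq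
      exact tT_zero hq.symm
    · apply Polynomial.toLaurent_injective
      rw [map_mul, hp, hq, map_zero toLaurent,
        mul_assoc, ← mul_assoc (T (m : ℤ)), (LaurentPolynomial.commute_T (m : ℤ) f).eq,
        mul_assoc, ← mul_assoc, hgf, zero_mul]
  · rintro ⟨q, hq, hqp⟩
    refine ⟨q.toLaurent, by simpa [Ne, Polynomial.toLaurent_eq_zero] using hq, ?_⟩
    have : q.toLaurent * f * T n = 0 := by
      rw [mul_assoc, ← hp, ← map_mul, hqp, map_zero toLaurent]
    exact tT_zero this

/-- For any semiring `S`, the polynomial semiring `S[X]` is eversible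
(the set of left zero-divisors equals the set of right zero-divisors) if and only
if the Laurent polynomial semiring `S[X;X⁻¹]` is eversible. -/
theorem polynomial_eversible_iff_laurent_eversible
    {S : Type*} [Semiring S] [Nontrivial S] :
    ({f : Polynomial S | ∃ g : Polynomial S, g ≠ 0 ∧ f * g = 0} =
        {f : Polynomial S | ∃ g : Polynomial S, g ≠ 0 ∧ g * f = 0}) ↔
      ({f : LaurentPolynomial S | ∃ g : LaurentPolynomial S, g ≠ 0 ∧ f * g = 0} =
        {f : LaurentPolynomial S | ∃ g : LaurentPolynomial S, g ≠ 0 ∧ g * f = 0}) := by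
  constructor
  · intro h
    ext f
    obtain ⟨n, p, hp⟩ := f.exists_T_pow
    simp only [Set.mem_setOf_eq]
    rw [Laurent_LZD_iff f n p hp, Laurent_RZD_iff f n p hp]
    exact Set.ext_iff.mp h p
  · intro h
    ext p
    simp only [Set.mem_setOf_eq]
    have hp : p.toLaurent = p.toLaurent * T (0 : ℕ) := by
      simp [LaurentPolynomial.T_zero]
    rw [← Laurent_LZD_iff p.toLaurent 0 p hp, ← Laurent_RZD_iff p.toLaurent 0 p hp]
    exact Set.ext_iff.mp h p.toLaurent
end

section
/- Let S and T be semirings and let M be an (S,T)-bisemimodule (an additive commutative monoid with a left S-action and a right T-action satisfying the usual semimodule axioms and the compatibility (s·m)·t = s·(m·t)). Assume Z_S(M) = {0} and Z_T(M) = {0}, i.e., for every nonzero m ∈ M, s·m = 0 implies s = 0 and m·t = 0 implies t = 0. Consider the triangular matrix semiring 𝓜 of all triples (s, m, t) ∈ S × M × T with componentwise addition and multiplication (s₁, m₁, t₁)·(s₂, m₂, t₂) = (s₁s₂, s₁·m₂ + m₁·t₂, t₁t₂). If 𝓜 is eversible (i.e., a triple (s, m, t) is a left zero-divisor of 𝓜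 — meaning there exists (s', m', t') ≠ (0,0,0) with s·s' = 0, s·m' + m·t' = 0, and t·t' = 0 — if and only if it is a right zero-divisor of 𝓜, defined symmetrically), then the semirings S and T are both eversible. -/
/-- Let `S`, `T` be semirings and `M` an `(S,T)`-bisemimodule (left
`S`-action, right `T`-action rendered as a `Tᵐᵒᵖ`-action, commuting with each other)
with `Z_S(M) = {0}` and `Z_T(M) = {0}`. Consider the triangular matrix semiring `𝓜`
of triples `(s, m, t) ∈ S × M × T` with componentwise addition and multiplication
`(s₁,m₁,t₁)·(s₂,m₂,t₂) = (s₁s₂, s₁·m₂ + m₁·t₂, t₁t₂)`. If `𝓜` is eversible (every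
left zero-divisor is a right zero-divisor and conversely), then both `S` and `T`
are eversible. -/
theorem triangular_matrix_semiring_eversible_implies_components_eversible
    {S T M : Type*} [Semiring S] [Semiring T] [Nontrivial S] [Nontrivial T]
    [AddCommMonoid M] [Module S M] [Module Tᵐᵒᵖ M] [SMulCommClass S Tᵐᵒᵖ M]
    (hZS : ∀ (s : S) (m : M), m ≠ 0 → s • m = 0 → s = 0)
    (hZT : ∀ (t : T) (m : M), m ≠ 0 → MulOpposite.op t • m = 0 → t = 0)
    (hev : ∀ x : S × M × T,
      (∃ y : S × M × T, y ≠ 0 ∧ x.1 * y.1 = 0 ∧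
          x.1 • y.2.1 + MulOpposite.op y.2.2 • x.2.1 = 0 ∧ x.2.2 * y.2.2 = 0) ↔
      (∃ y : S × M × T, y ≠ 0 ∧ y.1 * x.1 = 0 ∧
          y.1 • x.2.1 + MulOpposite.op x.2.2 • y.2.1 = 0 ∧ y.2.2 * x.2.2 = 0)) :
    (∀ s : S, (∃ s' : S, s' ≠ 0 ∧ s * s' = 0) ↔ (∃ s' : S, s' ≠ 0 ∧ s' * s = 0)) ∧
    (∀ t : T, (∃ t' : T, t' ≠ 0 ∧ t * t' = 0) ↔ (∃ t' : T, t' ≠ 0 ∧ t' * t = 0)) := by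
  constructor
  · intro s
    constructor
    · rintro ⟨s', hs', hss'⟩
      obtain ⟨y, hy, h1, h2, h3⟩ := (hev (s, 0, 1)).mp
        ⟨(s', 0, 0), by simp [Prod.ext_iff, hs'], by simpa using hss', by simp, by simp⟩
      simp only at h1 h2 h3
      have hy2 : y.2.2 = 0 := by simpa using h3
      have hy1 : y.2.1 = 0 := by simpa using h2
      refine ⟨y.1, ?_, h1⟩
      intro h
      exact hy (Prod.ext h (Prod.ext hy1 hy2))
    · rintro ⟨s', hs', hss'⟩
      obtain ⟨y, hy, h1, h2, h3⟩ := (hev (s, 0, 1)).mpr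
        ⟨(s', 0, 0), by simp [Prod.ext_iff, hs'], by simpa using hss', by simp, by simp⟩
      simp only at h1 h2 h3
      have hy2 : y.2.2 = 0 := by simpa using h3
      have hm : s • y.2.1 = 0 := by simpa [hy2] using h2
      by_cases hc : y.2.1 = 0
      · refine ⟨y.1, ?_, h1⟩
        intro h
        exact hy (Prod.ext h (Prod.ext hc hy2))
      · have hs0 : s = 0 := hZS s y.2.1 hc hm
        exact ⟨1, one_ne_zero, by simp [hs0]⟩
  · intro t
    constructor
    · rintro ⟨t', ht', htt'⟩
      obtain ⟨y, hy, h1, h2, h3⟩ := (hev (1, 0, t)).mp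
        ⟨(0, 0, t'), by simp [Prod.ext_iff, ht'], by simp, by simp, by simpa using htt'⟩
      simp only at h1 h2 h3
      have hy1 : y.1 = 0 := by simpa using h1
      have hm : MulOpposite.op t • y.2.1 = 0 := by simpa using h2
      by_cases hc : y.2.1 = 0
      · refine ⟨y.2.2, ?_, h3⟩
        intro h
        exact hy (Prod.ext hy1 (Prod.ext hc h))
      · have ht0 : t = 0 := hZT t y.2.1 hc hm
        exact ⟨1, one_ne_zero, by simp [ht0]⟩
    · rintro ⟨t', ht', htt'⟩
      obtain ⟨y, hy, h1, h2, h3⟩ := (hev (1, 0, t)).mpr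
        ⟨(0, 0, t'), by simp [Prod.ext_iff, ht'], by simp, by simp, by simpa using htt'⟩
      simp only at h1 h2 h3
      have hy1 : y.1 = 0 := by simpa using h1
      have hm : y.2.1 = 0 := by simpa using h2
      refine ⟨y.2.2, ?_, h3⟩
      intro h
      exact hy (Prod.ext hy1 (Prod.ext hm h))
end
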